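/- Let u, v be orthonormal vectors in ℝ⁷ and let L = span{u, v, u×v} (an associative 3-plane). Define j : V → V by j(X) = χ(u,v,X). Then: (a) if X is orthogonal to L, so is j(X); (b) j(j(X)) = −X for every X orthogonal to L; (c) ⟨j(X), j(Y)⟩ = ⟨X, Y⟩ for all X, Y orthogonal to L. In particular j defines an orthogonal complex structure on the 4-plane L⊥. -/

import Mathlib

open scoped RealInnerProductSpace

set_option maxHeartbeats 1600000
set_option maxRecDepth 8000

noncomputable section

/-- `V7` is ℝ⁷ with its Euclidean inner product. -/
abbrev V7 : Type := EuclideanSpace ℝ (Fin 7)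

/-- Evaluation of the wedge product `eⁱ ∧ eʲ ∧ eᵏ` of dual basis 1-forms on three vectors. -/
def w3 (i j k : Fin 7) (u v w : V7) : ℝ :=
  Matrix.det !![u i, u j, u k; v i, v j, v k; w i, w j, w k]

/-- Evaluation of the wedge product `eⁱ ∧ eʲ ∧ eᵏ ∧ eˡ` on four vectors. -/
def w4 (i j k l : Fin 7) (u v w z : V7) : ℝ :=
  Matrix.det !![u i, u j, u k, u l; v i, v j, v k, v l;
                w i, w j, w k, w l; z i, z j, z k, z l]

/-- The standard G₂ 3-form φ₀ = e¹²³+e¹⁴⁵+e¹⁶⁷+e²⁴⁶−e²⁵⁷−e³⁴⁷−e³⁵⁶ (0-indexed). -/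
def phi0 (u v w : V7) : ℝ :=
  w3 0 1 2 u v w + w3 0 3 4 u v w + w3 0 5 6 u v w + w3 1 3 5 u v w
    - w3 1 4 6 u v w - w3 2 3 6 u v w - w3 2 4 5 u v w

/-- The 4-form ψ₀ = ∗φ₀ = e⁴⁵⁶⁷+e²³⁶⁷+e²³⁴⁵+e¹³⁵⁷−e¹³⁴⁶−e¹²⁵⁶−e¹²⁴⁷ (0-indexed). -/
def psi0 (u v w z : V7) : ℝ :=
  w4 3 4 5 6 u v w z + w4 1 2 5 6 u v w z + w4 1 2 3 4 u v w z + w4 0 2 4 6 u v w z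
    - w4 0 2 3 5 u v w z - w4 0 1 4 5 u v w z - w4 0 1 3 6 u v w z

lemma ip7 (x y : V7) : ⟪x, y⟫ =
    x 0 * y 0 + x 1 * y 1 + x 2 * y 2 + x 3 * y 3 + x 4 * y 4 + x 5 * y 5 + x 6 * y 6 := by
  simp [PiLp.inner_apply, Fin.sum_univ_seven, RCLike.inner_apply, conj_trivial]
  ring

lemma detFour (A : Matrix (Fin 4) (Fin 4) ℝ) : A.det = A 0 0*A 1 1*A 2 2*A 3 3 - A 0 0*A 1 1*A 2 3*A 3 2 - A 0 0*A 1 2*A 2 1*A 3 3 + A 0 0*A 1 2*A 2 3*A 3 1 + A 0 0*A 1 3*A 2 1*A 3 2 - A 0 0*A 1 3*A 2 2*A 3 1 - A 0 1*A 1 0*A 2 2*A 3 3 + A 0 1*A 1 0*A 2 3*A 3 2 + A 0 1*A 1 2*A 2 0*A 3 3 - A 0 1*A 1 2*A 2 3*A 3 0 - A 0 1*A 1 3*A 2 0*A 3 2 + A 0 1*A 1 3*A 2 2*A 3 0 + A 0 2*A 1 0*A 2 1*A 3 3 - A 0 2*A 1 0*A 2 3*A 3 1 - A 0 2*A 1 1*A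 2 0*A 3 3 + A 0 2*A 1 1*A 2 3*A 3 0 + A 0 2*A 1 3*A 2 0*A 3 1 - A 0 2*A 1 3*A 2 1*A 3 0 - A 0 3*A 1 0*A 2 1*A 3 2 + A 0 3*A 1 0*A 2 2*A 3 1 + A 0 3*A 1 1*A 2 0*A 3 2 - A 0 3*A 1 1*A 2 2*A 3 0 - A 0 3*A 1 2*A 2 0*A 3 1 + A 0 3*A 1 2*A 2 1*A 3 0 := by
  simp [Matrix.det_succ_row_zero, Fin.sum_univ_succ, Fin.succAbove]
  ring

lemma phi0_eq (a b c : V7) : phi0 a b c = a 0*b 1*c 2 - a 0*b 2*c 1 - a 1*b 0*c 2 + a 1*b 2*c 0 + a 2*b 0*c 1 - a 2*b 1*c 0 + a 0*b 3*c 4 - a 0*b 4*c 3 - a 3*b 0*c 4 + a 3*b 4*c 0 + a 4*b 0*c 3 - a 4*b 3*c 0 + a 0*b 5*c 6 - a 0*b 6*c 5 - a 5*b 0*c 6 + a 5*b 6*c 0 + a 6*b 0*c 5 - a 6*b 5*c 0 + a 1*b 3*c 5 - a 1*b 5*c 3 - a 3*b 1*c 5 + a 3*b 5*c 1 + a 5*b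 1*c 3 - a 5*b 3*c 1 - a 1*b 4*c 6 + a 1*b 6*c 4 + a 4*b 1*c 6 - a 4*b 6*c 1 - a 6*b 1*c 4 + a 6*b 4*c 1 - a 2*b 3*c 6 + a 2*b 6*c 3 + a 3*b 2*c 6 - a 3*b 6*c 2 - a 6*b 2*c 3 + a 6*b 3*c 2 - a 2*b 4*c 5 + a 2*b 5*c 4 + a 4*b 2*c 5 - a 4*b 5*c 2 - a 5*b 2*c 4 + a 5*b 4*c 2 := by
  simp only [phi0, w3]
  simp [Matrix.det_fin_three, Matrix.cons_val', Matrix.cons_val_zero, Matrix.cons_val_one, Matrix.head_cons,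
    Matrix.empty_val', Matrix.cons_val_fin_one, Matrix.head_fin_const]
  ring

lemma psi0_eq (a b c d : V7) : psi0 a b c d = a 3*b 4*c 5*d 6 - a 3*b 4*c 6*d 5 - a 3*b 5*c 4*d 6 + a 3*b 5*c 6*d 4 + a 3*b 6*c 4*d 5 - a 3*b 6*c 5*d 4 - a 4*b 3*c 5*d 6 + a 4*b 3*c 6*d 5 + a 4*b 5*c 3*d 6 - a 4*b 5*c 6*d 3 - a 4*b 6*c 3*d 5 + a 4*b 6*c 5*d 3 + a 5*b 3*c 4*d 6 - a 5*b 3*c 6*d 4 - a 5*b 4*c 3*d 6 + a 5*b 4*c 6*d 3 + a 5*b 6*c 3*d 4 - a 5*b 6*c 4*d 3 - a 6*b 3*c 4*d 5 + a 6*b 3*c 5*d 4 + a 6*b 4*c 3*d 5 - a 6*b 4*c 5*d 3 - a 6*b 5*c 3*d 4 + a 6*b 5*c 4*d 3 + a 1*b 2*c 5*d 6 - a 1*b 2*c 6*d 5 - a 1*b 5*c 2*d 6 + a 1*b 5*c 6*d 2 + a 1*b 6*c 2*d 5 - a 1*b 6*c 5*d 2 - a 2*b 1*c 5*d 6 + a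 2*b 1*c 6*d 5 + a 2*b 5*c 1*d 6 - a 2*b 5*c 6*d 1 - a 2*b 6*c 1*d 5 + a 2*b 6*c 5*d 1 + a 5*b 1*c 2*d 6 - a 5*b 1*c 6*d 2 - a 5*b 2*c 1*d 6 + a 5*b 2*c 6*d 1 + a 5*b 6*c 1*d 2 - a 5*b 6*c 2*d 1 - a 6*b 1*c 2*d 5 + a 6*b 1*c 5*d 2 + a 6*b 2*c 1*d 5 - a 6*b 2*c 5*d 1 - a 6*b 5*c 1*d 2 + a 6*b 5*c 2*d 1 + a 1*b 2*c 3*d 4 - a 1*b 2*c 4*d 3 - a 1*b 3*c 2*d 4 + a 1*b 3*c 4*d 2 + a 1*b 4*c 2*d 3 - a 1*b 4*c 3*d 2 - a 2*b 1*c 3*d 4 + a 2*b 1*c 4*d 3 + a 2*b 3*c 1*d 4 - a 2*b 3*c 4*d 1 - a 2*b 4*c 1*d 3 + a 2*b 4*c 3*d 1 + a 3*b 1*c 2*d 4 - a 3*b 1*c 4*d 2 - a 3*b 2*c 1*d 4 + a 3*b 2*c 4*d 1 + a 3*b 4*c 1*d 2 - a 3*b 4*c 2*d 1 - a 4*b 1*c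 2*d 3 + a 4*b 1*c 3*d 2 + a 4*b 2*c 1*d 3 - a 4*b 2*c 3*d 1 - a 4*b 3*c 1*d 2 + a 4*b 3*c 2*d 1 + a 0*b 2*c 4*d 6 - a 0*b 2*c 6*d 4 - a 0*b 4*c 2*d 6 + a 0*b 4*c 6*d 2 + a 0*b 6*c 2*d 4 - a 0*b 6*c 4*d 2 - a 2*b 0*c 4*d 6 + a 2*b 0*c 6*d 4 + a 2*b 4*c 0*d 6 - a 2*b 4*c 6*d 0 - a 2*b 6*c 0*d 4 + a 2*b 6*c 4*d 0 + a 4*b 0*c 2*d 6 - a 4*b 0*c 6*d 2 - a 4*b 2*c 0*d 6 + a 4*b 2*c 6*d 0 + a 4*b 6*c 0*d 2 - a 4*b 6*c 2*d 0 - a 6*b 0*c 2*d 4 + a 6*b 0*c 4*d 2 + a 6*b 2*c 0*d 4 - a 6*b 2*c 4*d 0 - a 6*b 4*c 0*d 2 + a 6*b 4*c 2*d 0 - a 0*b 2*c 3*d 5 + a 0*b 2*c 5*d 3 + a 0*b 3*c 2*d 5 - a 0*b 3*c 5*d 2 - a 0*b 5*c 2*d 3 + a 0*b 5*c 3*d 2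 + a 2*b 0*c 3*d 5 - a 2*b 0*c 5*d 3 - a 2*b 3*c 0*d 5 + a 2*b 3*c 5*d 0 + a 2*b 5*c 0*d 3 - a 2*b 5*c 3*d 0 - a 3*b 0*c 2*d 5 + a 3*b 0*c 5*d 2 + a 3*b 2*c 0*d 5 - a 3*b 2*c 5*d 0 - a 3*b 5*c 0*d 2 + a 3*b 5*c 2*d 0 + a 5*b 0*c 2*d 3 - a 5*b 0*c 3*d 2 - a 5*b 2*c 0*d 3 + a 5*b 2*c 3*d 0 + a 5*b 3*c 0*d 2 - a 5*b 3*c 2*d 0 - a 0*b 1*c 4*d 5 + a 0*b 1*c 5*d 4 + a 0*b 4*c 1*d 5 - a 0*b 4*c 5*d 1 - a 0*b 5*c 1*d 4 + a 0*b 5*c 4*d 1 + a 1*b 0*c 4*d 5 - a 1*b 0*c 5*d 4 - a 1*b 4*c 0*d 5 + a 1*b 4*c 5*d 0 + a 1*b 5*c 0*d 4 - a 1*b 5*c 4*d 0 - a 4*b 0*c 1*d 5 + a 4*b 0*c 5*d 1 + a 4*b 1*c 0*d 5 - a 4*b 1*c 5*d 0 - a 4*b 5*c 0*d 1 + a 4*b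 5*c 1*d 0 + a 5*b 0*c 1*d 4 - a 5*b 0*c 4*d 1 - a 5*b 1*c 0*d 4 + a 5*b 1*c 4*d 0 + a 5*b 4*c 0*d 1 - a 5*b 4*c 1*d 0 - a 0*b 1*c 3*d 6 + a 0*b 1*c 6*d 3 + a 0*b 3*c 1*d 6 - a 0*b 3*c 6*d 1 - a 0*b 6*c 1*d 3 + a 0*b 6*c 3*d 1 + a 1*b 0*c 3*d 6 - a 1*b 0*c 6*d 3 - a 1*b 3*c 0*d 6 + a 1*b 3*c 6*d 0 + a 1*b 6*c 0*d 3 - a 1*b 6*c 3*d 0 - a 3*b 0*c 1*d 6 + a 3*b 0*c 6*d 1 + a 3*b 1*c 0*d 6 - a 3*b 1*c 6*d 0 - a 3*b 6*c 0*d 1 + a 3*b 6*c 1*d 0 + a 6*b 0*c 1*d 3 - a 6*b 0*c 3*d 1 - a 6*b 1*c 0*d 3 + a 6*b 1*c 3*d 0 + a 6*b 3*c 0*d 1 - a 6*b 3*c 1*d 0 := by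
  simp only [psi0, w4, detFour]
  simp [Matrix.cons_val', Matrix.cons_val_zero, Matrix.cons_val_one, Matrix.head_cons,
    Matrix.empty_val', Matrix.cons_val_fin_one, Matrix.head_fin_const]
  ring

lemma psi0_skew (a b c d : V7) : psi0 a b c d = - psi0 a b d c := by
  rw [psi0_eq, psi0_eq]; ring

/-- Lemma 2 of Akbulut–Salur: for orthonormal u, v, the map j(X) = χ(u,v,X) preserves the
orthogonal complement of the associative 3-plane L = span{u, v, u×v}, squares to −1 there,
and is orthogonal; hence it is an orthogonal complex structure on the 4-plane L⊥. -/
theorem chi_gives_complex_structure_on_normal_bundle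
    (cross : V7 → V7 → V7)
    (hcross : ∀ u v w : V7, ⟪cross u v, w⟫ = phi0 u v w)
    (chi : V7 → V7 → V7 → V7)
    (hchi : ∀ u v w z : V7, ⟪chi u v w, z⟫ = psi0 u v w z)
    (u v : V7) (hu : ‖u‖ = 1) (hv : ‖v‖ = 1) (huv : ⟪u, v⟫ = (0 : ℝ)) :
    (∀ X ∈ (Submodule.span ℝ ({u, v, cross u v} : Set V7))ᗮ,
        chi u v X ∈ (Submodule.span ℝ ({u, v, cross u v} : Set V7))ᗮ) ∧
    (∀ X ∈ (Submodule.span ℝ ({u, v, cross u v} : Set V7))ᗮ,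
        chi u v (chi u v X) = -X) ∧
    (∀ X ∈ (Submodule.span ℝ ({u, v, cross u v} : Set V7))ᗮ,
      ∀ Y ∈ (Submodule.span ℝ ({u, v, cross u v} : Set V7))ᗮ,
        ⟪chi u v X, chi u v Y⟫ = (⟪X, Y⟫ : ℝ)) := by
  have hcoord : ∀ (w : V7) (j : Fin 7), chi u v w j = psi0 u v w (EuclideanSpace.single j 1) := by
    intro w j
    have h := hchi u v w (EuclideanSpace.single j (1:ℝ))
    rwa [EuclideanSpace.inner_single_right, conj_trivial, one_mul] at h
  have hcr : ∀ (j : Fin 7), cross u v j = phi0 u v (EuclideanSpace.single j 1) := by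
    intro j
    have h := hcross u v (EuclideanSpace.single j (1:ℝ))
    rwa [EuclideanSpace.inner_single_right, conj_trivial, one_mul] at h
  have humem : u ∈ Submodule.span ℝ ({u, v, cross u v} : Set V7) :=
    Submodule.subset_span (by simp)
  have hvmem : v ∈ Submodule.span ℝ ({u, v, cross u v} : Set V7) :=
    Submodule.subset_span (by simp)
  have hcmem : cross u v ∈ Submodule.span ℝ ({u, v, cross u v} : Set V7) :=
    Submodule.subset_span (by simp)
  have ha : ∀ X : V7, chi u v X ∈ (Submodule.span ℝ ({u, v, cross u v} : Set V7))ᗮ := by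
    intro X
    rw [Submodule.mem_orthogonal]
    intro y hy
    have hle : Submodule.span ℝ ({u, v, cross u v} : Set V7) ≤ (ℝ ∙ (chi u v X))ᗮ := by
      rw [Submodule.span_le]
      intro s hs
      simp only [Set.mem_insert_iff, Set.mem_singleton_iff] at hs
      rw [SetLike.mem_coe, Submodule.mem_orthogonal_singleton_iff_inner_right]
      rcases hs with rfl | rfl | rfl
      · rw [hchi, psi0_eq]; ring
      · rw [hchi, psi0_eq]; ring
      · rw [hchi, psi0_eq]
        simp only [hcr, phi0_eq, EuclideanSpace.single_apply, Fin.reduceEq, reduceIte,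
          mul_zero, zero_mul, mul_one, one_mul, add_zero, zero_add, sub_zero, zero_sub, neg_zero]
        ring
    have h2 := Submodule.mem_orthogonal_singleton_iff_inner_right.mp (hle hy)
    rw [real_inner_comm] at h2
    exact h2
  have hg1 : u 0 * u 0 + u 1 * u 1 + u 2 * u 2 + u 3 * u 3 + u 4 * u 4 + u 5 * u 5 + u 6 * u 6 = 1 := by
    have h : ⟪u, u⟫ = (1:ℝ) := by
      rw [real_inner_self_eq_norm_mul_norm, hu]; norm_num
    rwa [ip7] at h
  have hg2 : v 0 * v 0 + v 1 * v 1 + v 2 * v 2 + v 3 * v 3 + v 4 * v 4 + v 5 * v 5 + v 6 * v 6 = 1 := by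
    have h : ⟪v, v⟫ = (1:ℝ) := by
      rw [real_inner_self_eq_norm_mul_norm, hv]; norm_num
    rwa [ip7] at h
  have hg3 : u 0 * v 0 + u 1 * v 1 + u 2 * v 2 + u 3 * v 3 + u 4 * v 4 + u 5 * v 5 + u 6 * v 6 = 0 := by
    rwa [ip7] at huv
  have hb : ∀ X ∈ (Submodule.span ℝ ({u, v, cross u v} : Set V7))ᗮ,
      chi u v (chi u v X) = -X := by
    intro X hX
    have hp : u 0 * X 0 + u 1 * X 1 + u 2 * X 2 + u 3 * X 3 + u 4 * X 4 + u 5 * X 5 + u 6 * X 6 = 0 := by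
      have h := Submodule.inner_right_of_mem_orthogonal humem hX
      rwa [ip7] at h
    have hq : v 0 * X 0 + v 1 * X 1 + v 2 * X 2 + v 3 * X 3 + v 4 * X 4 + v 5 * X 5 + v 6 * X 6 = 0 := by
      have h := Submodule.inner_right_of_mem_orthogonal hvmem hX
      rwa [ip7] at h
    have hr : phi0 u v X = 0 := by
      have h := Submodule.inner_right_of_mem_orthogonal hcmem hX
      rwa [hcross] at h
    rw [phi0_eq] at hr
    have hcomp0 : chi u v (chi u v X) 0 = -(X 0) := by
      rw [hcoord, psi0_eq]
      simp only [hcoord, psi0_eq, EuclideanSpace.single_apply, Fin.reduceEq, reduceIte,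
        mul_zero, zero_mul, mul_one, one_mul, add_zero, zero_add, sub_zero, zero_sub, neg_zero]
      linear_combination (-((v 0 * v 0 + v 1 * v 1 + v 2 * v 2 + v 3 * v 3 + v 4 * v 4 + v 5 * v 5 + v 6 * v 6)) * X 0) * hg1 + (-(X 0)) * hg2 + (((u 0 * v 0 + u 1 * v 1 + u 2 * v 2 + u 3 * v 3 + u 4 * v 4 + u 5 * v 5 + u 6 * v 6)) * X 0) * hg3 + (((v 0 * v 0 + v 1 * v 1 + v 2 * v 2 + v 3 * v 3 + v 4 * v 4 + v 5 * v 5 + v 6 * v 6)) * u 0 - ((u 0 * v 0 + u 1 * v 1 + u 2 * v 2 + u 3 * v 3 + u 4 * v 4 + u 5 * v 5 + u 6 * v 6)) * v 0) * hp + (((u 0 * u 0 + u 1 * u 1 + u 2 * u 2 + u 3 * u 3 + u 4 * u 4 + u 5 * u 5 + u 6 * u 6)) * v 0 - ((u 0 * v 0 + u 1 * v 1 + u 2 * v 2 + u 3 * v 3 + u 4 * v 4 + u 5 * v 5 + u 6 * v 6)) * u 0) * hq + (u 1*v 2 - u 2*v 1 + u 3*v 4 - u 4*v 3 + u 5*v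 6 - u 6*v 5) * hr
    have hcomp1 : chi u v (chi u v X) 1 = -(X 1) := by
      rw [hcoord, psi0_eq]
      simp only [hcoord, psi0_eq, EuclideanSpace.single_apply, Fin.reduceEq, reduceIte,
        mul_zero, zero_mul, mul_one, one_mul, add_zero, zero_add, sub_zero, zero_sub, neg_zero]
      linear_combination (-((v 0 * v 0 + v 1 * v 1 + v 2 * v 2 + v 3 * v 3 + v 4 * v 4 + v 5 * v 5 + v 6 * v 6)) * X 1) * hg1 + (-(X 1)) * hg2 + (((u 0 * v 0 + u 1 * v 1 + u 2 * v 2 + u 3 * v 3 + u 4 * v 4 + u 5 * v 5 + u 6 * v 6)) * X 1) * hg3 + (((v 0 * v 0 + v 1 * v 1 + v 2 * v 2 + v 3 * v 3 + v 4 * v 4 + v 5 * v 5 + v 6 * v 6)) * u 1 - ((u 0 * v 0 + u 1 * v 1 + u 2 * v 2 + u 3 * v 3 + u 4 * v 4 + u 5 * v 5 + u 6 * v 6)) * v 1) * hp + (((u 0 * u 0 + u 1 * u 1 + u 2 * u 2 + u 3 * u 3 + u 4 * u 4 + u 5 * u 5 + u 6 * u 6)) * v 1 - ((u 0 * v 0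 + u 1 * v 1 + u 2 * v 2 + u 3 * v 3 + u 4 * v 4 + u 5 * v 5 + u 6 * v 6)) * u 1) * hq + (- u 0*v 2 + u 2*v 0 + u 3*v 5 - u 4*v 6 - u 5*v 3 + u 6*v 4) * hr
    have hcomp2 : chi u v (chi u v X) 2 = -(X 2) := by
      rw [hcoord, psi0_eq]
      simp only [hcoord, psi0_eq, EuclideanSpace.single_apply, Fin.reduceEq, reduceIte,
        mul_zero, zero_mul, mul_one, one_mul, add_zero, zero_add, sub_zero, zero_sub, neg_zero]
      linear_combination (-((v 0 * v 0 + v 1 * v 1 + v 2 * v 2 + v 3 * v 3 + v 4 * v 4 + v 5 * v 5 + v 6 * v 6)) * X 2) * hg1 + (-(X 2)) * hg2 + (((u 0 * v 0 + u 1 * v 1 + u 2 * v 2 + u 3 * v 3 + u 4 * v 4 + u 5 * v 5 + u 6 * v 6)) * X 2) * hg3 + (((v 0 * v 0 + v 1 * v 1 + v 2 * v 2 + v 3 * v 3 + v 4 * v 4 + v 5 * v 5 + v 6 * v 6)) * u 2 - ((u 0 * v 0 + u 1 * v 1 + u 2 * v 2 + u 3 * v 3 + u 4 * v 4 + u 5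 * v 5 + u 6 * v 6)) * v 2) * hp + (((u 0 * u 0 + u 1 * u 1 + u 2 * u 2 + u 3 * u 3 + u 4 * u 4 + u 5 * u 5 + u 6 * u 6)) * v 2 - ((u 0 * v 0 + u 1 * v 1 + u 2 * v 2 + u 3 * v 3 + u 4 * v 4 + u 5 * v 5 + u 6 * v 6)) * u 2) * hq + (u 0*v 1 - u 1*v 0 - u 3*v 6 - u 4*v 5 + u 5*v 4 + u 6*v 3) * hr
    have hcomp3 : chi u v (chi u v X) 3 = -(X 3) := by
      rw [hcoord, psi0_eq]
      simp only [hcoord, psi0_eq, EuclideanSpace.single_apply, Fin.reduceEq, reduceIte,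
        mul_zero, zero_mul, mul_one, one_mul, add_zero, zero_add, sub_zero, zero_sub, neg_zero]
      linear_combination (-((v 0 * v 0 + v 1 * v 1 + v 2 * v 2 + v 3 * v 3 + v 4 * v 4 + v 5 * v 5 + v 6 * v 6)) * X 3) * hg1 + (-(X 3)) * hg2 + (((u 0 * v 0 + u 1 * v 1 + u 2 * v 2 + u 3 * v 3 + u 4 * v 4 + u 5 * v 5 + u 6 * v 6)) * X 3) * hg3 + (((v 0 * v 0 + v 1 * v 1 + v 2 * v 2 + v 3 * v 3 + v 4 * v 4 + v 5 * v 5 + v 6 * v 6)) * u 3 - ((u 0 * v 0 + u 1 * v 1 + u 2 * v 2 + u 3 * v 3 + u 4 * v 4 + u 5 * v 5 + u 6 * v 6)) * v 3) * hp + (((u 0 * u 0 + u 1 * u 1 + u 2 * u 2 + u 3 * u 3 + u 4 * u 4 + u 5 * u 5 + u 6 * u 6)) * v 3 - ((u 0 * v 0 + u 1 * v 1 + u 2 * v 2 + u 3 * v 3 + u 4 * v 4 + u 5 * v 5 + u 6 * v 6)) * u 3) * hq + (- u 0*v 4 - u 1*v 5 + u 2*v 6 + u 4*v 0 + u 5*v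 1 - u 6*v 2) * hr
    have hcomp4 : chi u v (chi u v X) 4 = -(X 4) := by
      rw [hcoord, psi0_eq]
      simp only [hcoord, psi0_eq, EuclideanSpace.single_apply, Fin.reduceEq, reduceIte,
        mul_zero, zero_mul, mul_one, one_mul, add_zero, zero_add, sub_zero, zero_sub, neg_zero]
      linear_combination (-((v 0 * v 0 + v 1 * v 1 + v 2 * v 2 + v 3 * v 3 + v 4 * v 4 + v 5 * v 5 + v 6 * v 6)) * X 4) * hg1 + (-(X 4)) * hg2 + (((u 0 * v 0 + u 1 * v 1 + u 2 * v 2 + u 3 * v 3 + u 4 * v 4 + u 5 * v 5 + u 6 * v 6)) * X 4) * hg3 + (((v 0 * v 0 + v 1 * v 1 + v 2 * v 2 + v 3 * v 3 + v 4 * v 4 + v 5 * v 5 + v 6 * v 6)) * u 4 - ((u 0 * v 0 + u 1 * v 1 + u 2 * v 2 + u 3 * v 3 + u 4 * v 4 + u 5 * v 5 + u 6 * v 6)) * v 4) * hp + (((u 0 * u 0 + u 1 * u 1 + u 2 * u 2 + u 3 * u 3 + u 4 * u 4 + u 5 * u 5 + u 6 * u 6)) * v 4 - ((u 0 * v 0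 + u 1 * v 1 + u 2 * v 2 + u 3 * v 3 + u 4 * v 4 + u 5 * v 5 + u 6 * v 6)) * u 4) * hq + (u 0*v 3 + u 1*v 6 + u 2*v 5 - u 3*v 0 - u 5*v 2 - u 6*v 1) * hr
    have hcomp5 : chi u v (chi u v X) 5 = -(X 5) := by
      rw [hcoord, psi0_eq]
      simp only [hcoord, psi0_eq, EuclideanSpace.single_apply, Fin.reduceEq, reduceIte,
        mul_zero, zero_mul, mul_one, one_mul, add_zero, zero_add, sub_zero, zero_sub, neg_zero]
      linear_combination (-((v 0 * v 0 + v 1 * v 1 + v 2 * v 2 + v 3 * v 3 + v 4 * v 4 + v 5 * v 5 + v 6 * v 6)) * X 5) * hg1 + (-(X 5)) * hg2 + (((u 0 * v 0 + u 1 * v 1 + u 2 * v 2 + u 3 * v 3 + u 4 * v 4 + u 5 * v 5 + u 6 * v 6)) * X 5) * hg3 + (((v 0 * v 0 + v 1 * v 1 + v 2 * v 2 + v 3 * v 3 + v 4 * v 4 + v 5 * v 5 + v 6 * v 6)) * u 5 - ((u 0 * v 0 + u 1 * v 1 + u 2 * v 2 + u 3 * v 3 + u 4 * v 4 + u 5 *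 v 5 + u 6 * v 6)) * v 5) * hp + (((u 0 * u 0 + u 1 * u 1 + u 2 * u 2 + u 3 * u 3 + u 4 * u 4 + u 5 * u 5 + u 6 * u 6)) * v 5 - ((u 0 * v 0 + u 1 * v 1 + u 2 * v 2 + u 3 * v 3 + u 4 * v 4 + u 5 * v 5 + u 6 * v 6)) * u 5) * hq + (- u 0*v 6 + u 1*v 3 - u 2*v 4 - u 3*v 1 + u 4*v 2 + u 6*v 0) * hr
    have hcomp6 : chi u v (chi u v X) 6 = -(X 6) := by
      rw [hcoord, psi0_eq]
      simp only [hcoord, psi0_eq, EuclideanSpace.single_apply, Fin.reduceEq, reduceIte,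
        mul_zero, zero_mul, mul_one, one_mul, add_zero, zero_add, sub_zero, zero_sub, neg_zero]
      linear_combination (-((v 0 * v 0 + v 1 * v 1 + v 2 * v 2 + v 3 * v 3 + v 4 * v 4 + v 5 * v 5 + v 6 * v 6)) * X 6) * hg1 + (-(X 6)) * hg2 + (((u 0 * v 0 + u 1 * v 1 + u 2 * v 2 + u 3 * v 3 + u 4 * v 4 + u 5 * v 5 + u 6 * v 6)) * X 6) * hg3 + (((v 0 * v 0 + v 1 * v 1 + v 2 * v 2 + v 3 * v 3 + v 4 * v 4 + v 5 * v 5 + v 6 * v 6)) * u 6 - ((u 0 * v 0 + u 1 * v 1 + u 2 * v 2 + u 3 * v 3 + u 4 * v 4 + u 5 * v 5 + u 6 * v 6)) * v 6) * hp + (((u 0 * u 0 + u 1 * u 1 + u 2 * u 2 + u 3 * u 3 + u 4 * u 4 + u 5 * u 5 + u 6 * u 6)) * v 6 - ((u 0 * v 0 + u 1 * v 1 + u 2 * v 2 + u 3 * v 3 + u 4 * v 4 + u 5 * v 5 + u 6 * v 6)) * u 6) * hq + (u 0*v 5 - u 1*v 4 - u 2*v 3 + u 3*v 2 + u 4*v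 1 - u 5*v 0) * hr
    ext k
    fin_cases k
    · exact hcomp0
    · exact hcomp1
    · exact hcomp2
    · exact hcomp3
    · exact hcomp4
    · exact hcomp5
    · exact hcomp6
  refine ⟨fun X _ => ha X, hb, ?_⟩
  intro X hX Y hY
  have h1 : ⟪chi u v X, chi u v Y⟫ = psi0 u v X (chi u v Y) := hchi u v X (chi u v Y)
  rw [h1, psi0_skew, ← hchi, hb Y hY, inner_neg_left, neg_neg]
  exact real_inner_comm X Y
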